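/- Fix 1 ≤ p < ∞ and r₀ > 0, and let ψ : (0, r₀) → ℝ be nondecreasing and K_p-convex (i.e. s ↦ ψ(K_p^{−1}(s)) is convex). Then: (i) the density Θ = lim_{0<s<t, t→0} (ψ(t) − ψ(s))/(K_p(t) − K_p(s)) exists with 0 ≤ Θ < ∞ (the quotients decrease as s and t decrease to 0); (ii) there exist c ∈ ℝ and r₁ ∈ (0, r₀] such that (ψ(r) − c)/K_p(r) decreases to Θ as r decreases to 0 in (0, r₁); (iii) if 1 ≤ p < 2 then (ψ(r) − ψ(0⁺))/K_p(r) decreases to Θ as r ↓ 0, where ψ(0⁺) = lim_{r↓0} ψ(r); (iv) if 2 ≤ p < ∞ then lim_{r↓0} ψ(r)/K_p(r) = Θ. -/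

import Mathlib

/-!
In the variable `u = K_p(r)` the function `φ = ψ ∘ K_p⁻¹` is convex and nondecreasing, so its chord
slopes, read in `r` as the `K`-slopes `(ψ t - ψ s) / (K t - K s)`, decrease as both endpoints
decrease; `Θ` is their infimum, nonnegative because `ψ` is nondecreasing.

For `p < 2`, `K_p → 0` at `0⁺`, so `ψ(0⁺)` exists and `(ψ r - ψ(0⁺)) / K_p(r)` is the limit of the
`K`-slopes over `[s, r]` as `s ↓ 0`; it inherits their monotonicity and their limit `Θ`.
For `p ≥ 2`, `K_p → -∞`. Take for `c` the value at `K = 0` of a chord on which `K < 0`: by convexity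
the chords nearer to `0` meet `K = 0` below `c`, which makes `(ψ r - c) / K_p(r)` monotone and
squeezes it between `Θ` and a `K`-slope plus an `O(1 / K_p(r))` term.
-/

open Set Filter Topology

noncomputable section

/-- The Riesz kernel `K_p`. -/
def rieszKernel (p t : ℝ) : ℝ :=
  if p < 2 then t ^ (2 - p) else if p = 2 then Real.log t else -(t ^ (2 - p))

/-- The inverse of `K_p` on `(0, ∞)`. -/
def rieszKernelInv (p : ℝ) : ℝ → ℝ :=
  Function.invFunOn (rieszKernel p) (Set.Ioi 0)

section RieszKernel

variable {p : ℝ}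

theorem rieszKernel_strictMonoOn (p : ℝ) : StrictMonoOn (rieszKernel p) (Ioi 0) := by
  intro x (hx : 0 < x) y _ hxy
  rcases lt_trichotomy p 2 with hp | rfl | hp
  · simpa [rieszKernel, hp] using Real.rpow_lt_rpow hx.le hxy (by linarith)
  · simpa [rieszKernel] using Real.log_lt_log hx hxy
  · simpa [rieszKernel, hp.not_gt, hp.ne'] using Real.rpow_lt_rpow_of_neg hx hxy (by linarith)

theorem leftInvOn_rieszKernelInv (p : ℝ) :
    LeftInvOn (rieszKernelInv p) (rieszKernel p) (Ioi 0) :=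
  (rieszKernel_strictMonoOn p).injOn.leftInvOn_invFunOn

theorem rieszKernel_pos (hp : p < 2) {t : ℝ} (ht : 0 < t) : 0 < rieszKernel p t := by
  simpa [rieszKernel, hp] using Real.rpow_pos_of_pos ht (2 - p)

theorem tendsto_rieszKernel_nhdsGT_zero (hp : p < 2) :
    Tendsto (rieszKernel p) (𝓝[>] 0) (𝓝 0) := by
  have h := (Real.continuousAt_rpow_const 0 (2 - p) (Or.inr (by linarith))).tendsto
  rw [Real.zero_rpow (by linarith)] at h
  exact (h.mono_left nhdsWithin_le_nhds).congr fun t => (if_pos hp).symm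

theorem tendsto_rieszKernel_atBot (hp : 2 ≤ p) :
    Tendsto (rieszKernel p) (𝓝[>] 0) atBot := by
  rcases hp.eq_or_lt with rfl | hp
  · exact Real.tendsto_log_nhdsGT_zero.congr fun t => by simp [rieszKernel]
  · have h := tendsto_neg_atTop_atBot.comp (tendsto_rpow_neg_nhdsGT_zero (by linarith : 2 - p < 0))
    exact h.congr fun t => by simp [rieszKernel, hp.not_gt, hp.ne']

end RieszKernel

theorem ConvexOn.slope_le_slope {𝕜 : Type*} [Field 𝕜] [LinearOrder 𝕜] [IsStrictOrderedRing 𝕜]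
    {S : Set 𝕜} {φ : 𝕜 → 𝕜} (hφ : ConvexOn 𝕜 S φ) {x y x' y' : 𝕜} (hx : x ∈ S) (hy : y ∈ S)
    (hx' : x' ∈ S) (hy' : y' ∈ S) (hxy : x < y) (hxx' : x ≤ x') (hyy' : y ≤ y') (hxy' : x' < y') :
    slope φ x y ≤ slope φ x' y' :=
  calc slope φ x y ≤ slope φ x y' :=
        hφ.slope_mono hx ⟨hy, hxy.ne'⟩ ⟨hy', (hxy.trans_le hyy').ne'⟩ hyy'
    _ = slope φ y' x := slope_comm _ _ _
    _ ≤ slope φ y' x' :=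
        hφ.slope_mono hy' ⟨hx, (hxy.trans_le hyy').ne⟩ ⟨hx', hxy'.ne⟩ hxx'
    _ = slope φ x' y' := slope_comm _ _ _

section KSlope

variable {K ψ : ℝ → ℝ} {r₀ s t : ℝ}

def kSlope (K ψ : ℝ → ℝ) (s t : ℝ) : ℝ :=
  (ψ t - ψ s) / (K t - K s)

def KSlopeMonotone (K ψ : ℝ → ℝ) (r₀ : ℝ) : Prop :=
  ∀ ⦃s t s' t' : ℝ⦄, 0 < s → s < t → s ≤ s' → t ≤ t' → s' < t' → t' < r₀ →
    kSlope K ψ s t ≤ kSlope K ψ s' t'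

theorem kSlopeMonotone_of_convexOn {Kinv : ℝ → ℝ} (hK : StrictMonoOn K (Ioo 0 r₀))
    (hinv : LeftInvOn Kinv K (Ioo 0 r₀))
    (hconv : ConvexOn ℝ (K '' Ioo 0 r₀) (fun u => ψ (Kinv u))) :
    KSlopeMonotone K ψ r₀ := by
  intro s t s' t' hs hst hss' htt' hst' ht'
  have mem : ∀ {x}, s ≤ x → x ≤ t' → x ∈ Ioo 0 r₀ :=
    fun h₁ h₂ => ⟨hs.trans_le h₁, h₂.trans_lt ht'⟩
  have hs₀ := mem le_rfl (hst.le.trans htt')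
  have ht₀ := mem hst.le htt'
  have hs'₀ := mem hss' hst'.le
  have ht'₀ := mem (hst.le.trans htt') le_rfl
  have key := hconv.slope_le_slope (mem_image_of_mem K hs₀) (mem_image_of_mem K ht₀)
    (mem_image_of_mem K hs'₀) (mem_image_of_mem K ht'₀) (hK hs₀ ht₀ hst)
    (hK.monotoneOn hs₀ hs'₀ hss') (hK.monotoneOn ht₀ ht'₀ htt') (hK hs'₀ ht'₀ hst')
  simp only [slope_def_field, hinv hs₀, hinv ht₀, hinv hs'₀, hinv ht'₀] at key
  exact key

theorem sub_eq_kSlope_mul (h : K s ≠ K t) : ψ t - ψ s = kSlope K ψ s t * (K t - K s) :=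
  (div_mul_cancel₀ _ (sub_ne_zero.2 h.symm)).symm

theorem kSlope_nonneg (hψ : MonotoneOn ψ (Ioo 0 r₀)) (hK : StrictMonoOn K (Ioo 0 r₀))
    (hs : 0 < s) (hst : s < t) (ht : t < r₀) : 0 ≤ kSlope K ψ s t := by
  have hs₀ : s ∈ Ioo 0 r₀ := ⟨hs, hst.trans ht⟩
  have ht₀ : t ∈ Ioo 0 r₀ := ⟨hs.trans hst, ht⟩
  exact div_nonneg (sub_nonneg.2 (hψ hs₀ ht₀ hst.le)) (sub_nonneg.2 (hK hs₀ ht₀ hst).le)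

def kDensity (K ψ : ℝ → ℝ) (r₀ : ℝ) : ℝ :=
  sInf {x | ∃ s t, 0 < s ∧ s < t ∧ t < r₀ ∧ kSlope K ψ s t = x}

theorem kDensity_nonneg (hψ : MonotoneOn ψ (Ioo 0 r₀)) (hK : StrictMonoOn K (Ioo 0 r₀))
    (hr₀ : 0 < r₀) : 0 ≤ kDensity K ψ r₀ := by
  refine le_csInf ⟨_, r₀ / 3, r₀ / 2, by positivity, by linarith, by linarith, rfl⟩ ?_
  rintro _ ⟨s, t, hs, hst, ht, rfl⟩
  exact kSlope_nonneg hψ hK hs hst ht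

theorem kDensity_le_kSlope (hψ : MonotoneOn ψ (Ioo 0 r₀)) (hK : StrictMonoOn K (Ioo 0 r₀))
    (hs : 0 < s) (hst : s < t) (ht : t < r₀) : kDensity K ψ r₀ ≤ kSlope K ψ s t := by
  refine csInf_le ⟨0, ?_⟩ ⟨s, t, hs, hst, ht, rfl⟩
  rintro _ ⟨s, t, hs, hst, ht, rfl⟩
  exact kSlope_nonneg hψ hK hs hst ht

theorem exists_forall_kSlope_lt (hq : KSlopeMonotone K ψ r₀) (hr₀ : 0 < r₀) {b : ℝ}
    (hb : kDensity K ψ r₀ < b) :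
    ∃ δ, 0 < δ ∧ δ < r₀ ∧ ∀ s t, 0 < s → s < t → t < δ → kSlope K ψ s t < b := by
  have hne : {x | ∃ s t, 0 < s ∧ s < t ∧ t < r₀ ∧ kSlope K ψ s t = x}.Nonempty :=
    ⟨_, r₀ / 3, r₀ / 2, by positivity, by linarith, by linarith, rfl⟩
  obtain ⟨_, ⟨s₀, t₀, hs₀, hst₀, ht₀, rfl⟩, hb₀⟩ := exists_lt_of_csInf_lt hne hb
  refine ⟨s₀, hs₀, hst₀.trans ht₀, fun s t hs hst ht => ?_⟩
  exact (hq hs hst (hst.trans ht).le (ht.trans hst₀).le hst₀ ht₀).trans_lt hb₀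

theorem exists_forall_abs_kSlope_sub_kDensity_lt (hq : KSlopeMonotone K ψ r₀)
    (hψ : MonotoneOn ψ (Ioo 0 r₀)) (hK : StrictMonoOn K (Ioo 0 r₀)) (hr₀ : 0 < r₀) {ε : ℝ}
    (hε : 0 < ε) :
    ∃ δ, 0 < δ ∧ ∀ s t, 0 < s → s < t → t < δ → |kSlope K ψ s t - kDensity K ψ r₀| < ε := by
  obtain ⟨δ, hδ, hδr₀, hlt⟩ := exists_forall_kSlope_lt hq hr₀ (lt_add_of_pos_right _ hε)
  refine ⟨δ, hδ, fun s t hs hst ht => abs_lt.2 ⟨?_, ?_⟩⟩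
  · linarith [kDensity_le_kSlope hψ hK hs hst (ht.trans hδr₀)]
  · linarith [hlt s t hs hst ht]

end KSlope

section KernelToZero

variable {K ψ : ℝ → ℝ} {r₀ L : ℝ}

theorem exists_tendsto_nhdsGT_zero (hq : KSlopeMonotone K ψ r₀) (hψ : MonotoneOn ψ (Ioo 0 r₀))
    (hK : StrictMonoOn K (Ioo 0 r₀)) (hK0 : Tendsto K (𝓝[>] 0) (𝓝 0)) (hr₀ : 0 < r₀) :
    ∃ L, Tendsto ψ (𝓝[>] 0) (𝓝 L) := by
  set r := r₀ / 2
  have hr : r ∈ Ioo 0 r₀ := ⟨half_pos hr₀, half_lt_self hr₀⟩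
  have hmono : MonotoneOn (fun s => kSlope K ψ s r) (Ioo 0 r) :=
    fun s hs s' hs' hss' => hq hs.1 hs.2 hss' le_rfl hs'.2 hr.2
  have hbdd : BddBelow ((fun s => kSlope K ψ s r) '' Ioo 0 r) :=
    ⟨0, forall_mem_image.2 fun s hs => kSlope_nonneg hψ hK hs.1 hs.2 hr.2⟩
  obtain ⟨l, hl⟩ : ∃ l, Tendsto (fun s => kSlope K ψ s r) (𝓝[>] 0) (𝓝 l) :=
    ⟨_, hmono.tendsto_nhdsWithin_Ioo_right (nonempty_Ioo.2 hr.1) hbdd⟩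
  refine ⟨ψ r - l * (K r - 0),
    (tendsto_const_nhds.sub (hl.mul (tendsto_const_nhds.sub hK0))).congr' ?_⟩
  filter_upwards [Ioo_mem_nhdsGT hr.1] with s hs
  have hKsr := hK ⟨hs.1, hs.2.trans hr.2⟩ hr hs.2
  rw [← sub_eq_kSlope_mul hKsr.ne, sub_sub_cancel]

theorem tendsto_kSlope_nhdsGT_zero (hK0 : Tendsto K (𝓝[>] 0) (𝓝 0))
    (hL : Tendsto ψ (𝓝[>] 0) (𝓝 L)) {r : ℝ} (hr : K r ≠ 0) :
    Tendsto (fun s => kSlope K ψ s r) (𝓝[>] 0) (𝓝 ((ψ r - L) / K r)) := by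
  have h := (tendsto_const_nhds (x := ψ r)).sub hL |>.div
    ((tendsto_const_nhds (x := K r)).sub hK0) (by rwa [sub_zero])
  rw [sub_zero] at h
  exact h

theorem monotoneOn_sub_div_of_tendsto (hq : KSlopeMonotone K ψ r₀)
    (hK0 : Tendsto K (𝓝[>] 0) (𝓝 0)) (hKpos : ∀ t ∈ Ioo 0 r₀, 0 < K t)
    (hL : Tendsto ψ (𝓝[>] 0) (𝓝 L)) :
    MonotoneOn (fun r => (ψ r - L) / K r) (Ioo 0 r₀) := by
  intro r hr r' hr' hrr'
  refine le_of_tendsto_of_tendsto (tendsto_kSlope_nhdsGT_zero hK0 hL (hKpos r hr).ne')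
    (tendsto_kSlope_nhdsGT_zero hK0 hL (hKpos r' hr').ne') ?_
  filter_upwards [Ioo_mem_nhdsGT hr.1] with s hs
  exact hq hs.1 hs.2 le_rfl hrr' (hs.2.trans_le hrr') hr'.2

theorem tendsto_sub_div_kDensity_of_tendsto (hq : KSlopeMonotone K ψ r₀)
    (hψ : MonotoneOn ψ (Ioo 0 r₀)) (hK : StrictMonoOn K (Ioo 0 r₀))
    (hK0 : Tendsto K (𝓝[>] 0) (𝓝 0)) (hKpos : ∀ t ∈ Ioo 0 r₀, 0 < K t)
    (hL : Tendsto ψ (𝓝[>] 0) (𝓝 L)) (hr₀ : 0 < r₀) :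
    Tendsto (fun r => (ψ r - L) / K r) (𝓝[>] 0) (𝓝 (kDensity K ψ r₀)) := by
  have hlim := fun r (hr : r ∈ Ioo 0 r₀) => tendsto_kSlope_nhdsGT_zero hK0 hL (hKpos r hr).ne'
  refine tendsto_order.2 ⟨fun a ha => ?_, fun b hb => ?_⟩
  · filter_upwards [Ioo_mem_nhdsGT hr₀] with r hr
    refine ha.trans_le (ge_of_tendsto (hlim r hr) ?_)
    filter_upwards [Ioo_mem_nhdsGT hr.1] with s hs
    exact kDensity_le_kSlope hψ hK hs.1 hs.2 hr.2
  · obtain ⟨δ, hδ, hδr₀, hδb⟩ := exists_forall_kSlope_lt hq hr₀ hb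
    filter_upwards [Ioo_mem_nhdsGT hδ] with r hr
    have hr₀' : r ∈ Ioo 0 r₀ := ⟨hr.1, hr.2.trans hδr₀⟩
    have hhalf := half_lt_self hr.1
    refine (le_of_tendsto (hlim r hr₀') ?_).trans_lt (hδb _ r (half_pos hr.1) hhalf hr.2)
    filter_upwards [Ioo_mem_nhdsGT (half_pos hr.1)] with s hs
    exact hq hs.1 (hs.2.trans hhalf) hs.2.le le_rfl hhalf hr₀'.2

end KernelToZero

section KernelToBot

variable {K ψ : ℝ → ℝ} {r₀ a b c r t : ℝ}

/-- The value at `K = 0` of the chord of `ψ` over `[s, t]`, with `ψ` viewed as a function of `K`. -/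
def kIntercept (K ψ : ℝ → ℝ) (s t : ℝ) : ℝ :=
  ψ s - kSlope K ψ s t * K s

theorem kIntercept_eq (h : K s ≠ K t) : kIntercept K ψ s t = ψ t - kSlope K ψ s t * K t := by
  rw [kIntercept]
  linear_combination -sub_eq_kSlope_mul (ψ := ψ) h

theorem sub_div_eq_kSlope_add (hr : K r ≠ 0) :
    (ψ r - c) / K r = kSlope K ψ r t + (kIntercept K ψ r t - c) / K r := by
  rw [kIntercept]
  field_simp
  ring

theorem sub_div_eq_kSlope_add' (h : K r ≠ K t) (ht : K t ≠ 0) :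
    (ψ t - c) / K t = kSlope K ψ r t + (kIntercept K ψ r t - c) / K t := by
  rw [kIntercept_eq h]
  field_simp
  ring

theorem kIntercept_le_kIntercept (hq : KSlopeMonotone K ψ r₀) (hK : StrictMonoOn K (Ioo 0 r₀))
    {s t t' : ℝ} (hs : 0 < s) (hst : s < t) (htt' : t < t') (ht' : t' < r₀) (hKt : K t ≤ 0) :
    kIntercept K ψ s t ≤ kIntercept K ψ t t' := by
  have hKst := hK ⟨hs, hst.trans (htt'.trans ht')⟩ ⟨hs.trans hst, htt'.trans ht'⟩ hst
  rw [kIntercept_eq hKst.ne, kIntercept]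
  linarith [mul_le_mul_of_nonpos_right (hq hs hst hst.le htt'.le htt' ht') hKt]

theorem monotoneOn_sub_kIntercept_div (hq : KSlopeMonotone K ψ r₀)
    (hK : StrictMonoOn K (Ioo 0 r₀)) (ha : 0 < a) (hab : a < b) (hb : b < r₀) (hKa : K a < 0) :
    MonotoneOn (fun r => (ψ r - kIntercept K ψ a b) / K r) (Ioo 0 a) := by
  intro r hr r' hr' hrr'
  rcases hrr'.eq_or_lt with rfl | hlt
  · exact le_rfl
  have hr'₀ : r' ∈ Ioo 0 r₀ := ⟨hr'.1, hr'.2.trans (hab.trans hb)⟩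
  have hKr' : K r' < 0 := (hK hr'₀ ⟨ha, hab.trans hb⟩ hr'.2).trans hKa
  have hKrr' := hK ⟨hr.1, hlt.trans hr'₀.2⟩ hr'₀ hlt
  have hI : kIntercept K ψ r r' - kIntercept K ψ a b ≤ 0 := sub_nonpos.2 <|
    (kIntercept_le_kIntercept hq hK hr.1 hlt hr'.2 (hab.trans hb) hKr'.le).trans
      (kIntercept_le_kIntercept hq hK hr'.1 hr'.2 hab hb hKa.le)
  dsimp only
  rw [sub_div_eq_kSlope_add (t := r') (hKrr'.trans hKr').ne,
    sub_div_eq_kSlope_add' hKrr'.ne hKr'.ne, add_le_add_iff_left, ← neg_div_neg_eq _ (K r), ← neg_div_neg_eq _ (K r')]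
  exact div_le_div_of_nonneg_left (by linarith) (by linarith) (by linarith)

theorem kDensity_le_sub_kIntercept_div (hq : KSlopeMonotone K ψ r₀)
    (hψ : MonotoneOn ψ (Ioo 0 r₀)) (hK : StrictMonoOn K (Ioo 0 r₀)) (ha : 0 < a) (hab : a < b)
    (hb : b < r₀) (hKa : K a < 0) (hr : r ∈ Ioo 0 a) :
    kDensity K ψ r₀ ≤ (ψ r - kIntercept K ψ a b) / K r := by
  have hKr : K r < 0 := (hK ⟨hr.1, hr.2.trans (hab.trans hb)⟩ ⟨ha, hab.trans hb⟩ hr.2).trans hKa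
  rw [sub_div_eq_kSlope_add (t := a) hKr.ne]
  have hI := kIntercept_le_kIntercept hq hK hr.1 hr.2 hab hb hKa.le
  have := div_nonneg_of_nonpos (sub_nonpos.2 hI) hKr.le
  linarith [kDensity_le_kSlope hψ hK hr.1 hr.2 (hab.trans hb)]

theorem sub_div_le_kSlope_add (hψ : MonotoneOn ψ (Ioo 0 r₀)) (hK : StrictMonoOn K (Ioo 0 r₀))
    (hr : 0 < r) (hrt : r < t) (ht : t < r₀) (hKt : K t < 0) :
    (ψ r - c) / K r ≤ kSlope K ψ r t + (ψ t - kDensity K ψ r₀ * K t - c) / K r := by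
  have hKrt := hK ⟨hr, hrt.trans ht⟩ ⟨hr.trans hrt, ht⟩ hrt
  rw [sub_div_eq_kSlope_add (t := t) (hKrt.trans hKt).ne, kIntercept_eq hKrt.ne]
  refine (add_le_add_iff_left _).2 (div_le_div_of_nonpos_of_le (hKrt.trans hKt).le ?_)
  linarith [mul_le_mul_of_nonpos_right (kDensity_le_kSlope hψ hK hr hrt ht) hKt.le]

theorem tendsto_sub_kIntercept_div_kDensity (hq : KSlopeMonotone K ψ r₀)
    (hψ : MonotoneOn ψ (Ioo 0 r₀)) (hK : StrictMonoOn K (Ioo 0 r₀))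
    (hKbot : Tendsto K (𝓝[>] 0) atBot) (ha : 0 < a) (hab : a < b) (hb : b < r₀) (hKa : K a < 0) :
    Tendsto (fun r => (ψ r - kIntercept K ψ a b) / K r) (𝓝[>] 0) (𝓝 (kDensity K ψ r₀)) := by
  set Θ := kDensity K ψ r₀
  refine tendsto_order.2 ⟨fun x hx => ?_, fun x hx => ?_⟩
  · filter_upwards [Ioo_mem_nhdsGT ha] with r hr
    exact hx.trans_le (kDensity_le_sub_kIntercept_div hq hψ hK ha hab hb hKa hr)
  obtain ⟨δ, hδ, hδr₀, hδx⟩ :=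
    exists_forall_kSlope_lt hq (ha.trans (hab.trans hb)) (left_lt_add_div_two.2 hx)
  set t := min δ a / 2
  have ht : 0 < t := by positivity
  have htδ : t < δ := (half_lt_self (lt_min hδ ha)).trans_le (min_le_left _ _)
  have hta : t < a := (half_lt_self (lt_min hδ ha)).trans_le (min_le_right _ _)
  have hKt : K t < 0 := (hK ⟨ht, htδ.trans hδr₀⟩ ⟨ha, hab.trans hb⟩ hta).trans hKa
  have hrem : Tendsto (fun r => (ψ t - Θ * K t - kIntercept K ψ a b) / K r) (𝓝[>] 0) (𝓝 0) :=
    tendsto_const_nhds.div_atBot hKbot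
  filter_upwards [Ioo_mem_nhdsGT ht,
    hrem.eventually (gt_mem_nhds (sub_pos.2 (add_div_two_lt_right.2 hx)))] with r hr hrem_lt
  calc _ ≤ _ := sub_div_le_kSlope_add hψ hK hr.1 hr.2 (htδ.trans hδr₀) hKt
    _ < (Θ + x) / 2 + (x - (Θ + x) / 2) := add_lt_add (hδx r t hr.1 hr.2 htδ) hrem_lt
    _ = x := by ring

theorem exists_monotoneOn_sub_div_tendsto_kDensity (hq : KSlopeMonotone K ψ r₀)
    (hψ : MonotoneOn ψ (Ioo 0 r₀)) (hK : StrictMonoOn K (Ioo 0 r₀))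
    (hKbot : Tendsto K (𝓝[>] 0) atBot) (hr₀ : 0 < r₀) :
    ∃ c r₁, 0 < r₁ ∧ r₁ ≤ r₀ ∧ MonotoneOn (fun r => (ψ r - c) / K r) (Ioo 0 r₁) ∧
      Tendsto (fun r => (ψ r - c) / K r) (𝓝[>] 0) (𝓝 (kDensity K ψ r₀)) := by
  obtain ⟨a, hKa, ha, har₀⟩ :=
    ((hKbot.eventually (eventually_lt_atBot 0)).and (Ioo_mem_nhdsGT hr₀)).exists
  have hab := left_lt_add_div_two.2 har₀
  have hb := add_div_two_lt_right.2 har₀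
  exact ⟨_, a, ha, har₀.le, monotoneOn_sub_kIntercept_div hq hK ha hab hb hKa,
    tendsto_sub_kIntercept_div_kDensity hq hψ hK hKbot ha hab hb hKa⟩

end KernelToBot

theorem stmt8_general (p : ℝ) (r₀ : ℝ) (hr₀ : 0 < r₀)
    (ψ : ℝ → ℝ) (hmono : MonotoneOn ψ (Set.Ioo 0 r₀))
    (hconv : ConvexOn ℝ (rieszKernel p '' Set.Ioo 0 r₀)
      (fun s => ψ (rieszKernelInv p s))) :
    ∃ Θ : ℝ, 0 ≤ Θ ∧
      -- (i) the difference quotients decrease as s and t decrease to 0 ...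
      (∀ s t s' t' : ℝ, 0 < s → s < t → s ≤ s' → t ≤ t' → s' < t' → t' < r₀ →
        (ψ t - ψ s) / (rieszKernel p t - rieszKernel p s) ≤
          (ψ t' - ψ s') / (rieszKernel p t' - rieszKernel p s')) ∧
      -- ... and converge to the density Θ
      (∀ ε : ℝ, 0 < ε → ∃ δ : ℝ, 0 < δ ∧ ∀ s t : ℝ, 0 < s → s < t → t < δ →
        |(ψ t - ψ s) / (rieszKernel p t - rieszKernel p s) - Θ| < ε) ∧
      -- (ii) for some c and r₁, (ψ(r) − c)/K_p(r) decreases to Θ as r ↓ 0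
      (∃ c r₁ : ℝ, 0 < r₁ ∧ r₁ ≤ r₀ ∧
        MonotoneOn (fun r => (ψ r - c) / rieszKernel p r) (Set.Ioo 0 r₁) ∧
        Tendsto (fun r => (ψ r - c) / rieszKernel p r) (𝓝[>] 0) (𝓝 Θ)) ∧
      -- (iii) if 1 ≤ p < 2 then (ψ(r) − ψ(0⁺))/K_p(r) decreases to Θ as r ↓ 0
      (p < 2 → ∃ L : ℝ, Tendsto ψ (𝓝[>] 0) (𝓝 L) ∧
        MonotoneOn (fun r => (ψ r - L) / rieszKernel p r) (Set.Ioo 0 r₀) ∧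
        Tendsto (fun r => (ψ r - L) / rieszKernel p r) (𝓝[>] 0) (𝓝 Θ)) ∧
      -- (iv) if 2 ≤ p < ∞ then ψ(r)/K_p(r) → Θ as r ↓ 0
      (2 ≤ p → Tendsto (fun r => ψ r / rieszKernel p r) (𝓝[>] 0) (𝓝 Θ)) := by
  have hK : StrictMonoOn (rieszKernel p) (Ioo 0 r₀) :=
    (rieszKernel_strictMonoOn p).mono Ioo_subset_Ioi_self
  have hq : KSlopeMonotone (rieszKernel p) ψ r₀ :=
    kSlopeMonotone_of_convexOn hK ((leftInvOn_rieszKernelInv p).mono Ioo_subset_Ioi_self) hconv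
  refine ⟨kDensity (rieszKernel p) ψ r₀, kDensity_nonneg hmono hK hr₀, hq,
    fun ε hε => exists_forall_abs_kSlope_sub_kDensity_lt hq hmono hK hr₀ hε, ?_⟩
  rcases lt_or_ge p 2 with hp | hp
  · have hK0 := tendsto_rieszKernel_nhdsGT_zero hp
    have hKpos : ∀ t ∈ Ioo 0 r₀, 0 < rieszKernel p t := fun t ht => rieszKernel_pos hp ht.1
    obtain ⟨L, hL⟩ := exists_tendsto_nhdsGT_zero hq hmono hK hK0 hr₀
    have hmonoL := monotoneOn_sub_div_of_tendsto hq hK0 hKpos hL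
    have hlimL := tendsto_sub_div_kDensity_of_tendsto hq hmono hK hK0 hKpos hL hr₀
    exact ⟨⟨L, r₀, hr₀, le_rfl, hmonoL, hlimL⟩, fun _ => ⟨L, hL, hmonoL, hlimL⟩,
      fun hp' => absurd hp' hp.not_ge⟩
  · have hKbot := tendsto_rieszKernel_atBot hp
    obtain ⟨c, r₁, hr₁, hr₁r₀, hmonoc, hlimc⟩ :=
      exists_monotoneOn_sub_div_tendsto_kDensity hq hmono hK hKbot hr₀
    refine ⟨⟨c, r₁, hr₁, hr₁r₀, hmonoc, hlimc⟩, fun hp' => absurd hp hp'.not_ge, fun _ => ?_⟩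
    simpa [← add_div] using hlimc.add ((tendsto_const_nhds (x := c)).div_atBot hKbot)

/-- Existence of the density `Θ` of a nondecreasing `K_p`-convex function on `(0, r₀)`,
together with the monotone-convergence descriptions of `Θ`. -/
theorem stmt8 (p : ℝ) (hp : 1 ≤ p) (r₀ : ℝ) (hr₀ : 0 < r₀)
    (ψ : ℝ → ℝ) (hmono : MonotoneOn ψ (Set.Ioo 0 r₀))
    (hconv : ConvexOn ℝ (rieszKernel p '' Set.Ioo 0 r₀)
      (fun s => ψ (rieszKernelInv p s))) :
    ∃ Θ : ℝ, 0 ≤ Θ ∧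
      -- (i) the difference quotients decrease as s and t decrease to 0 ...
      (∀ s t s' t' : ℝ, 0 < s → s < t → s ≤ s' → t ≤ t' → s' < t' → t' < r₀ →
        (ψ t - ψ s) / (rieszKernel p t - rieszKernel p s) ≤
          (ψ t' - ψ s') / (rieszKernel p t' - rieszKernel p s')) ∧
      -- ... and converge to the density Θ
      (∀ ε : ℝ, 0 < ε → ∃ δ : ℝ, 0 < δ ∧ ∀ s t : ℝ, 0 < s → s < t → t < δ →
        |(ψ t - ψ s) / (rieszKernel p t - rieszKernel p s) - Θ| < ε) ∧
      -- (ii) for some c and r₁, (ψ(r) − c)/K_p(r) decreases to Θ as r ↓ 0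
      (∃ c r₁ : ℝ, 0 < r₁ ∧ r₁ ≤ r₀ ∧
        MonotoneOn (fun r => (ψ r - c) / rieszKernel p r) (Set.Ioo 0 r₁) ∧
        Tendsto (fun r => (ψ r - c) / rieszKernel p r) (𝓝[>] 0) (𝓝 Θ)) ∧
      -- (iii) if 1 ≤ p < 2 then (ψ(r) − ψ(0⁺))/K_p(r) decreases to Θ as r ↓ 0
      (p < 2 → ∃ L : ℝ, Tendsto ψ (𝓝[>] 0) (𝓝 L) ∧
        MonotoneOn (fun r => (ψ r - L) / rieszKernel p r) (Set.Ioo 0 r₀) ∧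
        Tendsto (fun r => (ψ r - L) / rieszKernel p r) (𝓝[>] 0) (𝓝 Θ)) ∧
      -- (iv) if 2 ≤ p < ∞ then ψ(r)/K_p(r) → Θ as r ↓ 0
      (2 ≤ p → Tendsto (fun r => ψ r / rieszKernel p r) (𝓝[>] 0) (𝓝 Θ)) :=
  stmt8_general p r₀ hr₀ ψ hmono hconv

end
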